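/- arXiv:1908.09179 — 6 statements merged into one kernel-verified Lean document; each statement's English description precedes it below -/
import Mathlib

section
/- Let m ∈ ℕ, let L be a ring, and let a, b ∈ L. Define the m×m matrices S by S[i,j] = [j = i+1] and U_b by U_b[i,j] = C(i,j)·(ad_a)^{i-j}(b) for i ≥ j, 0 for i < j, where ad_a(y) = a*y - y*a. Define the column vector H_c of size m by (H_c)[i] = a^i·c for c ∈ L. Then for every n ∈ ℕ and every u ∈ ℕ with 0 ≤ u ≤ m - (n+1), the u-th entry of the vector (U_b·S)^n·H_1 equals the u-th entry of H_{(b*a)^n}, i.e., equals a^u·(b*a)^n. -/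
/-!
Left multiplication by `a` is right multiplication by `a` plus `ad_a`, and these two commute, so
the binomial theorem gives `a ^ u * b = ∑ k, C(u,k) • ad_a^(u-k)(b) * a ^ k`. Row `u` of `U_b * S * H_c`
is this sum multiplied on the right by `a * c`, so `U_b * S` sends `H_c` to `H_(b * a * c)` except in
the last row, where the shift runs off the end of the vector; each iteration costs one row.
-/

open Finset

theorem pow_mul_eq_sum_choose_iterate_ad {L : Type*} [Ring L] (a b : L) (n : ℕ) :
    a ^ n * b = ∑ k ∈ range (n + 1),
      n.choose k • ((fun y => a * y - y * a)^[n - k] b * a ^ k) := by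
  set R := LinearMap.mulRight ℤ a
  set D := LinearMap.mulLeft ℤ a - R
  have hD : ⇑D = fun y => a * y - y * a := rfl
  have hcomm : Commute R D :=
    ((LinearMap.commute_mulLeft_right a a).symm.sub_right (Commute.refl R))
  calc a ^ n * b = ((R + D) ^ n) b := by
        rw [add_sub_cancel, LinearMap.pow_mulLeft, LinearMap.mulLeft_apply]
    _ = _ := by
        rw [hcomm.add_pow, LinearMap.sum_apply]
        refine sum_congr rfl fun k _ => ?_
        rw [Module.End.mul_apply, Module.End.natCast_apply, Module.End.mul_apply, map_nsmul,
          map_nsmul, Module.End.coe_pow D, hD, LinearMap.pow_mulRight, LinearMap.mulRight_apply]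

section ShiftMatrices

variable {m : ℕ} {L ι : Type*}

theorem shift_mul_apply [NonAssocSemiring L] {S : Matrix (Fin m) (Fin m) L}
    (hS : ∀ i j : Fin m, S i j = if (j : ℕ) = (i : ℕ) + 1 then 1 else 0)
    (M : Matrix (Fin m) ι L) (i : Fin m) (j : ι) (hi : (i : ℕ) + 1 < m) :
    (S * M) i j = M ⟨i + 1, hi⟩ j := by
  rw [Matrix.mul_apply, sum_eq_single ⟨i + 1, hi⟩]
  · simp [hS]
  · intro k _ hk
    simp [hS, show (k : ℕ) ≠ i + 1 from fun h => hk (Fin.ext h)]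
  · simp

theorem sum_fin_ite_le {M : Type*} [AddCommMonoid M] (f : ℕ → M) {u : ℕ} (hu : u < m) :
    ∑ k : Fin m, (if (k : ℕ) ≤ u then f k else 0) = ∑ k ∈ range (u + 1), f k := by
  obtain ⟨r, rfl⟩ : ∃ r, m = u + 1 + r := ⟨m - (u + 1), by omega⟩
  rw [Fin.sum_univ_eq_sum_range (fun k => if k ≤ u then f k else 0), sum_range_add,
    sum_eq_zero (s := range r) fun k _ => if_neg (by omega), add_zero]
  exact sum_congr rfl fun k hk => if_pos (Nat.lt_succ_iff.mp (mem_range.mp hk))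

theorem choose_ad_mul_shift_mul_apply [Ring L] {a b : L} {S U : Matrix (Fin m) (Fin m) L}
    (hS : ∀ i j : Fin m, S i j = if (j : ℕ) = (i : ℕ) + 1 then 1 else 0)
    (hU : ∀ i j : Fin m, U i j =
      if (j : ℕ) ≤ (i : ℕ) then
        ((i : ℕ).choose j) • ((fun y => a * y - y * a)^[(i : ℕ) - (j : ℕ)] b)
      else 0)
    {W : Matrix (Fin m) ι L} {j : ι} {c : L} {u : ℕ} (hu : u + 1 < m)
    (hW : ∀ k (hk : k < m), k ≤ u + 1 → W ⟨k, hk⟩ j = a ^ k * c) :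
    (U * S * W) ⟨u, by omega⟩ j = a ^ u * (b * a) * c := by
  have hterm : ∀ k : Fin m, U ⟨u, by omega⟩ k * (S * W) k j =
      if (k : ℕ) ≤ u then
        u.choose k • ((fun y => a * y - y * a)^[u - k] b * a ^ (k : ℕ)) * (a * c)
      else 0 := by
    intro k
    rw [hU]
    split_ifs with hk
    · rw [shift_mul_apply hS W k j (by simp only at hk; omega), hW _ _ (by simp only at hk; omega),
        smul_mul_assoc, smul_mul_assoc, pow_succ, mul_assoc, mul_assoc]
    · exact zero_mul _
  rw [Matrix.mul_assoc, Matrix.mul_apply, sum_congr rfl fun k _ => hterm k,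
    sum_fin_ite_le (fun k => u.choose k • ((fun y => a * y - y * a)^[u - k] b * a ^ k) * (a * c))
      (by omega), ← sum_mul, ← pow_mul_eq_sum_choose_iterate_ad, mul_assoc, mul_assoc, mul_assoc]

end ShiftMatrices

theorem stmt_9 (m : ℕ) (L : Type*) [Ring L] (a b : L)
    (S : Matrix (Fin m) (Fin m) L)
    (hS : ∀ i j : Fin m, S i j = if (j : ℕ) = (i : ℕ) + 1 then 1 else 0)
    (U : Matrix (Fin m) (Fin m) L)
    (hU : ∀ i j : Fin m, U i j =
      if (j : ℕ) ≤ (i : ℕ) then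
        ((i : ℕ).choose j) • ((fun y => a * y - y * a)^[(i : ℕ) - (j : ℕ)] b)
      else 0)
    (H : L → Matrix (Fin m) (Fin 1) L)
    (hH : ∀ c, ∀ i : Fin m, ∀ j : Fin 1, H c i j = a ^ (i : ℕ) * c)
    (n u : ℕ) (hu : u + (n + 1) ≤ m) :
    ((U * S) ^ n * H 1) ⟨u, by omega⟩ 0 = a ^ u * (b * a) ^ n := by
  induction n generalizing u with
  | zero => simp [hH]
  | succ n ih =>
    rw [pow_succ', Matrix.mul_assoc,
      choose_ad_mul_shift_mul_apply hS hU (by omega) fun k hk hku => ih k (by omega),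
      mul_assoc, ← pow_succ']
end

section
/- Let m ∈ ℕ, let L be a ring, and let a, b ∈ L. Let n ∈ ℕ with n < m. Define the m×m matrices S by S[i,j] = [j = i+1] and U_b by U_b[i,j] = C(i,j)·(ad_a)^{i-j}(b) for i ≥ j and 0 otherwise, where ad_a(y) = a*y - y*a. Let e_0 be the standard basis column vector of size m with 1 in position 0, and let H_1 be the column vector with i-th entry a^i. Then (b*a)^n = e_0^T · (U_b·S)^n · H_1, where the right-hand side is a 1×1 matrix identified with its unique entry. -/
/-!
Left multiplication by `a` splits as `R_a + ad_a` with commuting summands, so the binomial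
theorem gives `a^i b = ∑_j C(i,j) ad_a^{i-j}(b) a^j`: the matrix `U_b` sends the column of powers
`(a^j x)_j` to `(a^j b x)_j`, and `S` turns `(a^j x)_j` into `(a^j (a x))_j`. Hence row `i` of
`(U_b S)^k H_1` is `a^i (b a)^k` as long as `i + k < m` (the shift loses the last row at each
step), and row `0` with `k = n` is the claim.
-/

open Finset

theorem pow_mul_eq_sum_choose_iterate_commutator_mul {R : Type*} [Ring R] (a b : R) (i : ℕ) :
    a ^ i * b = ∑ j ∈ range (i + 1),
      (i.choose j • (fun y => a * y - y * a)^[i - j] b) * a ^ j := by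
  have hcomm : Commute (LinearMap.mulRight ℤ a) (LinearMap.mulLeft ℤ a - LinearMap.mulRight ℤ a) :=
    (LinearMap.commute_mulLeft_right a a).symm.sub_right (Commute.refl _)
  have hbinom := congrArg (· b) (hcomm.add_pow i)
  simp only [add_sub_cancel, LinearMap.pow_mulLeft, LinearMap.mulLeft_apply] at hbinom
  rw [hbinom, LinearMap.sum_apply]
  refine sum_congr rfl fun j _ => ?_
  rw [Module.End.mul_apply, Module.End.mul_apply, LinearMap.pow_mulRight, LinearMap.mulRight_apply,
    Module.End.natCast_apply, map_nsmul, Module.End.pow_apply]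
  rfl

namespace Matrix

variable {m : ℕ} {ι L : Type*} [Ring L]

theorem shift_mul_apply_of_lt {S : Matrix (Fin m) (Fin m) L}
    (hS : ∀ i j : Fin m, S i j = if (j : ℕ) = (i : ℕ) + 1 then 1 else 0)
    (V : Matrix (Fin m) ι L) (i : Fin m) (hi : (i : ℕ) + 1 < m) (q : ι) :
    (S * V) i q = V ⟨i + 1, hi⟩ q := by
  rw [mul_apply, sum_eq_single ⟨i + 1, hi⟩ (fun j _ hj => ?_) (by simp), hS, if_pos rfl, one_mul]
  rw [hS, if_neg (fun h => hj (Fin.ext h)), zero_mul]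

theorem transpose_mul_apply_of_single_zero {e : Matrix (Fin m) ι L}
    (he : ∀ p : Fin m, ∀ q : ι, e p q = if (p : ℕ) = 0 then 1 else 0)
    {κ : Type*} (W : Matrix (Fin m) κ L) (hm : 0 < m) (q : ι) (r : κ) :
    (eᵀ * W) q r = W ⟨0, hm⟩ r := by
  rw [mul_apply, sum_eq_single ⟨0, hm⟩ (fun j _ hj => ?_) (by simp), transpose_apply, he,
    if_pos rfl, one_mul]
  rw [transpose_apply, he, if_neg (fun h => hj (Fin.ext h)), zero_mul]

theorem mul_apply_of_binomial_commutator {a b : L} {U : Matrix (Fin m) (Fin m) L}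
    (hU : ∀ i j : Fin m, U i j =
      if (j : ℕ) ≤ (i : ℕ) then
        ((i : ℕ).choose j) • ((fun y => a * y - y * a)^[(i : ℕ) - (j : ℕ)] b)
      else 0)
    {V : Matrix (Fin m) ι L} {i : Fin m} {q : ι} {x : L}
    (hV : ∀ j : Fin m, j ≤ i → V j q = a ^ (j : ℕ) * x) :
    (U * V) i q = a ^ (i : ℕ) * (b * x) := by
  set f : ℕ → L := fun t => ((i : ℕ).choose t • (fun y => a * y - y * a)^[i - t] b) * a ^ t * x
  have hterm : ∀ j : Fin m, U i j * V j q = if (j : ℕ) ≤ i then f j else 0 := by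
    intro j
    rw [hU]
    split_ifs with h
    · rw [hV j h, ← mul_assoc]
    · rw [zero_mul]
  have hfilter : (range m).filter (· ≤ (i : ℕ)) = range (i + 1) := by
    ext t; simp only [mem_filter, mem_range]; omega
  rw [mul_apply, Fintype.sum_congr _ _ hterm,
    Fin.sum_univ_eq_sum_range (fun t => if t ≤ (i : ℕ) then f t else 0), ← sum_filter, hfilter,
    ← sum_mul, ← pow_mul_eq_sum_choose_iterate_commutator_mul, mul_assoc]

theorem pow_mul_apply_of_powers {a b : L} {S U : Matrix (Fin m) (Fin m) L}
    (hS : ∀ i j : Fin m, S i j = if (j : ℕ) = (i : ℕ) + 1 then 1 else 0)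
    (hU : ∀ i j : Fin m, U i j =
      if (j : ℕ) ≤ (i : ℕ) then
        ((i : ℕ).choose j) • ((fun y => a * y - y * a)^[(i : ℕ) - (j : ℕ)] b)
      else 0)
    {H : Matrix (Fin m) ι L} (hH : ∀ i : Fin m, ∀ q : ι, H i q = a ^ (i : ℕ)) (q : ι) :
    ∀ (k : ℕ) (i : Fin m), (i : ℕ) + k < m → ((U * S) ^ k * H) i q = a ^ (i : ℕ) * (b * a) ^ k
  | 0, i, _ => by rw [pow_zero, Matrix.one_mul, hH, pow_zero, mul_one]
  | k + 1, i, hi => by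
    have hSV : ∀ j : Fin m, j ≤ i →
        (S * ((U * S) ^ k * H)) j q = a ^ (j : ℕ) * (a * (b * a) ^ k) := by
      intro j hj
      have hj' : (j : ℕ) ≤ i := hj
      rw [shift_mul_apply_of_lt hS _ _ (by omega),
        pow_mul_apply_of_powers hS hU hH q k _ (by simp only; omega), pow_succ, mul_assoc]
    rw [pow_succ', Matrix.mul_assoc, Matrix.mul_assoc, mul_apply_of_binomial_commutator hU hSV,
      ← mul_assoc b, ← pow_succ']

end Matrix

theorem stmt_10 (m n : ℕ) (hnm : n < m) (L : Type*) [Ring L] (a b : L)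
    (S : Matrix (Fin m) (Fin m) L)
    (hS : ∀ i j : Fin m, S i j = if (j : ℕ) = (i : ℕ) + 1 then 1 else 0)
    (U : Matrix (Fin m) (Fin m) L)
    (hU : ∀ i j : Fin m, U i j =
      if (j : ℕ) ≤ (i : ℕ) then
        ((i : ℕ).choose j) • ((fun y => a * y - y * a)^[(i : ℕ) - (j : ℕ)] b)
      else 0)
    (e₀ : Matrix (Fin m) (Fin 1) L)
    (he : ∀ p : Fin m, ∀ q : Fin 1, e₀ p q = if (p : ℕ) = 0 then 1 else 0)
    (H₁ : Matrix (Fin m) (Fin 1) L)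
    (hH : ∀ i : Fin m, ∀ j : Fin 1, H₁ i j = a ^ (i : ℕ)) :
    (b * a) ^ n = (e₀.transpose * (U * S) ^ n * H₁) 0 0 := by
  have hm : 0 < m := by omega
  rw [Matrix.mul_assoc, Matrix.transpose_mul_apply_of_single_zero he _ hm,
    Matrix.pow_mul_apply_of_powers hS hU hH 0 n ⟨0, hm⟩ (by simpa using hnm), pow_zero, one_mul]
end

section
/- Let K be a commutative ring, L a K-algebra, and let a, h, x ∈ L satisfy a*x - x*a = h and h*x = x*h. Then for every polynomial g ∈ K[t], a·g(x) = g(x)·a + g'(x)·h, where g(x) denotes the evaluation of g at x and g' is the formal derivative of g. -/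
theorem stmt_12 (K : Type*) [CommRing K] (L : Type*) [Ring L] [Algebra K L]
    (a h x : L) (h1 : a * x - x * a = h) (h2 : h * x = x * h)
    (g : Polynomial K) :
    a * Polynomial.aeval x g =
      Polynomial.aeval x g * a + Polynomial.aeval x (Polynomial.derivative g) * h := by
  have hx : a * x = x * a + h := by rw [← h1]; noncomm_ring
  induction g using Polynomial.induction_on with
  | C k => simp [Algebra.commutes]
  | add p q hp hq =>
      simp only [map_add, mul_add, add_mul] at *
      rw [hp, hq]; abel
  | monomial n k ih =>
      have key : (Polynomial.C k * Polynomial.X ^ (n + 1) : Polynomial K)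
          = (Polynomial.C k * Polynomial.X ^ n) * Polynomial.X := by ring
      rw [key, Polynomial.derivative_mul, Polynomial.derivative_X]
      simp only [map_mul, map_add, map_one, Polynomial.aeval_X, mul_one]
      simp only [map_mul] at ih
      set d := Polynomial.aeval x (Polynomial.derivative (Polynomial.C k * Polynomial.X ^ n))
      generalize (Polynomial.aeval x (Polynomial.C k : Polynomial K) : L) * Polynomial.aeval x (Polynomial.X ^ n : Polynomial K) = p at ih ⊢
      calc a * (p * x) = (p * a + d * h) * x := by rw [← mul_assoc, ih]
        _ = p * (x * a + h) + d * (x * h) := by rw [add_mul, mul_assoc, ← hx, mul_assoc, h2]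
        _ = p * x * a + (d * x + p) * h := by noncomm_ring
end

section
/- Let K be a commutative ring, L a K-algebra, and let a, h, x ∈ L satisfy a*x - x*a = h, h*a = a*h, and h*x = x*h. Then for every polynomial g ∈ K[t] and every p ∈ ℕ, (ad_a)^p(g(x)) = g^{(p)}(x)·h^p, where ad_a(y) = a*y - y*a, (ad_a)^p is its p-th iterate, and g^{(p)} is the p-th formal derivative of g. -/
theorem stmt_14 (K : Type*) [CommRing K] (L : Type*) [Ring L] [Algebra K L]
    (a h x : L) (h1 : a * x - x * a = h) (h2 : h * a = a * h) (h3 : h * x = x * h)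
    (g : Polynomial K) (p : ℕ) :
    (fun y => a * y - y * a)^[p] (Polynomial.aeval x g) =
      Polynomial.aeval x ((fun q => Polynomial.derivative q)^[p] g) * h ^ p := by
  -- commutator with powers of x
  have pow' : ∀ n : ℕ, a * x ^ (n + 1) - x ^ (n + 1) * a = ((n : L) + 1) * x ^ n * h := by
    intro n
    induction n with
    | zero => simp [h1]
    | succ m ih =>
      have key : a * x ^ (m + 1 + 1) - x ^ (m + 1 + 1) * a
          = (a * x ^ (m + 1) - x ^ (m + 1) * a) * x + x ^ (m + 1) * (a * x - x * a) := by
        noncomm_ring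
      rw [key, ih, h1, mul_assoc, mul_assoc, h3]
      push_cast
      noncomm_ring
  -- h commutes with aeval x g
  have hcomm : ∀ q : Polynomial K, h * Polynomial.aeval x q = Polynomial.aeval x q * h := by
    intro q
    induction q using Polynomial.induction_on' with
    | add p q hp hq => simp [mul_add, add_mul, hp, hq]
    | monomial n c =>
      simp only [Polynomial.aeval_monomial]
      rw [← mul_assoc, ← Algebra.commutes, mul_assoc, mul_assoc]
      congr 1
      induction n with
      | zero => simp
      | succ m ih =>
        rw [pow_succ, ← mul_assoc, ih, mul_assoc, h3, ← mul_assoc]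
  -- the derivative step
  have step : ∀ q : Polynomial K,
      a * Polynomial.aeval x q - Polynomial.aeval x q * a
        = Polynomial.aeval x (Polynomial.derivative q) * h := by
    intro q
    induction q using Polynomial.induction_on' with
    | add p q hp hq =>
      simp only [map_add, Polynomial.derivative_add]
      conv_rhs => rw [add_mul]
      rw [← hp, ← hq]
      noncomm_ring
    | monomial n c =>
      have hc : a * algebraMap K L c = algebraMap K L c * a := (Algebra.commutes c a).symm
      have factor : a * (algebraMap K L c * x ^ n) - algebraMap K L c * x ^ n * a
          = algebraMap K L c * (a * x ^ n - x ^ n * a) := by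
        rw [← mul_assoc, hc]
        noncomm_ring
      simp only [Polynomial.aeval_monomial, Polynomial.derivative_monomial, map_mul,
        map_natCast]
      rw [factor]
      rcases n with _ | k
      · simp
      · rw [pow', Nat.add_sub_cancel]
        push_cast
        noncomm_ring
  induction p with
  | zero => simp
  | succ p ih =>
    rw [Function.iterate_succ_apply', ih]
    show a * (Polynomial.aeval x ((fun q => Polynomial.derivative q)^[p] g) * h ^ p)
        - Polynomial.aeval x ((fun q => Polynomial.derivative q)^[p] g) * h ^ p * a
      = Polynomial.aeval x ((fun q => Polynomial.derivative q)^[p + 1] g) * h ^ (p + 1)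
    have hpa : h ^ p * a = a * h ^ p := Commute.pow_left h2 p
    set u := Polynomial.aeval x ((fun q => Polynomial.derivative q)^[p] g) with hu
    have lhs : a * (u * h ^ p) - u * h ^ p * a = (a * u - u * a) * h ^ p := by
      rw [sub_mul, ← mul_assoc, mul_assoc u, hpa, ← mul_assoc]
    rw [lhs, step, Function.iterate_succ_apply']
    rw [mul_assoc, ← pow_succ']
end

section
/- Let K be a commutative ring, L a K-algebra, m ∈ ℕ, and let a, h, x ∈ L satisfy a*x - x*a = h, h*a = a*h, h*x = x*h. For g ∈ K[t], define m×m matrices over L: U_{g(x)} with (i,j)-entry C(i,j)·(ad_a)^{i-j}(g(x)) for i ≥ j and 0 for i < j, and V_g with (i,j)-entry C(i,j)·g^{(i-j)}(x)·h^{i-j} for i ≥ j and 0 for i < j. Then U_{g(x)} = V_g. -/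
open Polynomial

lemma stmt_15_aux1 (K : Type*) [CommRing K] (L : Type*) [Ring L] [Algebra K L]
    (a h x : L) (h1 : a * x - x * a = h) (h3 : h * x = x * h) (p : Polynomial K) :
    a * aeval x p - aeval x p * a = aeval x (derivative p) * h := by
  induction p using Polynomial.induction_on with
  | C c => simp [Algebra.commutes]
  | add p q hp hq =>
      rw [map_add, derivative_add, map_add]
      conv_rhs => rw [add_mul]
      rw [← hp, ← hq]
      noncomm_ring
  | monomial n c hc =>
      have hsplit : C c * X ^ (n + 1) = (C c * X ^ n) * X := by ring
      rw [hsplit, map_mul, aeval_X, derivative_mul, derivative_X, mul_one, map_add, add_mul]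
      conv_rhs => rw [map_mul, aeval_X]
      set u := aeval x (C c * X ^ n)
      set d := aeval x (derivative (C c * X ^ n))
      have key : a * (u * x) - u * x * a = (a * u - u * a) * x + u * (a * x - x * a) := by
        noncomm_ring
      rw [key, hc, h1, mul_assoc, h3, ← mul_assoc]

lemma stmt_15_aux2 (K : Type*) [CommRing K] (L : Type*) [Ring L] [Algebra K L]
    (a h x : L) (h1 : a * x - x * a = h) (h2 : h * a = a * h) (h3 : h * x = x * h)
    (g : Polynomial K) (n : ℕ) :
    (fun y => a * y - y * a)^[n] (aeval x g)
      = aeval x ((fun q => derivative q)^[n] g) * h ^ n := by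
  induction n with
  | zero => simp
  | succ n ih =>
      rw [Function.iterate_succ_apply', Function.iterate_succ_apply', ih]
      have hcomm : h ^ n * a = a * h ^ n := Commute.pow_left h2 n
      set u := aeval x ((fun q => derivative q)^[n] g) with hu
      calc a * (u * h ^ n) - u * h ^ n * a
          = (a * u - u * a) * h ^ n := by
            rw [mul_assoc u, hcomm]; noncomm_ring
        _ = aeval x (derivative ((fun q => derivative q)^[n] g)) * h ^ (n + 1) := by
            rw [stmt_15_aux1 K L a h x h1 h3, pow_succ', mul_assoc]

theorem stmt_15 (K : Type*) [CommRing K] (L : Type*) [Ring L] [Algebra K L]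
    (m : ℕ) (a h x : L)
    (h1 : a * x - x * a = h) (h2 : h * a = a * h) (h3 : h * x = x * h)
    (g : Polynomial K)
    (U V : Matrix (Fin m) (Fin m) L)
    (hU : ∀ i j : Fin m, U i j =
      if (j : ℕ) ≤ (i : ℕ) then
        ((i : ℕ).choose j) •
          ((fun y => a * y - y * a)^[(i : ℕ) - (j : ℕ)] (Polynomial.aeval x g))
      else 0)
    (hV : ∀ i j : Fin m, V i j =
      if (j : ℕ) ≤ (i : ℕ) then
        ((i : ℕ).choose j) •
          (Polynomial.aeval x ((fun q => Polynomial.derivative q)^[(i : ℕ) - (j : ℕ)] g) *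
            h ^ ((i : ℕ) - (j : ℕ)))
      else 0) :
    U = V := by
  ext i j
  rw [hU, hV]
  split_ifs with hij
  · rw [stmt_15_aux2 K L a h x h1 h2 h3 g]
  · rfl
end

section
/- Let K be a commutative ring, L a K-algebra, m, n ∈ ℕ with n < m, and let a, h, x ∈ L satisfy a*x - x*a = h, h*a = a*h, h*x = x*h. Let g ∈ K[t]. Define the m×m matrices S with S[i,j] = [j = i+1] and V_g with (i,j)-entry C(i,j)·g^{(i-j)}(x)·h^{i-j} for i ≥ j and 0 for i < j; let e_0 be the standard basis column vector with 1 in position 0, and H_1 the column vector with i-th entry a^i. Then (g(x)·a)^n = e_0^T · (V_g·S)^n · H_1. -/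
open Polynomial Finset

section
variable {K L : Type*} [CommRing K] [Ring L] [Algebra K L]
variable (a h x : L)

lemma comm_aeval {c : L} (hx : Commute c x) (f : K[X]) :
    Commute c (Polynomial.aeval x f) :=
  Algebra.commute_of_mem_adjoin_singleton_of_commute
    (Polynomial.aeval_mem_adjoin_singleton K x) hx

lemma aux_pow (h1 : a * x - x * a = h) (h3 : h * x = x * h) :
    ∀ k : ℕ, a * x ^ (k + 1) = x ^ (k + 1) * a + (k + 1) • (x ^ k * h) := by
  have hax : a * x = x * a + h := by rw [← h1]; abel
  intro k
  induction k with
  | zero => simpa using hax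
  | succ k ih =>
    calc a * x ^ (k + 2) = (a * x ^ (k + 1)) * x := by rw [pow_succ, mul_assoc]
      _ = (x ^ (k + 1) * a + (k + 1) • (x ^ k * h)) * x := by rw [ih]
      _ = x ^ (k + 1) * (a * x) + (k + 1) • (x ^ k * (h * x)) := by
          rw [add_mul, smul_mul_assoc, mul_assoc, mul_assoc]
      _ = x ^ (k + 1) * (x * a) + x ^ (k + 1) * h + (k + 1) • (x ^ (k + 1) * h) := by
          rw [hax, h3, mul_add,
            show x ^ k * (x * h) = x ^ (k + 1) * h by rw [← mul_assoc, ← pow_succ]]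
      _ = x ^ (k + 2) * a + (k + 2) • (x ^ (k + 1) * h) := by
          rw [← mul_assoc, ← pow_succ, add_assoc, add_comm (x ^ (k + 1) * h), ← succ_nsmul]

lemma aux_A (h1 : a * x - x * a = h) (h3 : h * x = x * h) (f : K[X]) :
    a * Polynomial.aeval x f =
      Polynomial.aeval x f * a + Polynomial.aeval x (Polynomial.derivative f) * h := by
  induction f using Polynomial.induction_on with
  | C c => simp [Algebra.commutes]
  | add p q hp hq =>
    simp only [map_add, mul_add, add_mul, hp, hq]; abel
  | monomial n c _ =>
    simp only [map_mul, aeval_C, aeval_X_pow, derivative_C_mul, derivative_X_pow,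
      Nat.add_sub_cancel, map_natCast, map_add, map_one]
    rw [← mul_assoc a, ← Algebra.commutes c a, mul_assoc,
      aux_pow a h x h1 h3 n, mul_add, nsmul_eq_mul]
    push_cast
    noncomm_ring

end

section
variable {K L : Type*} [CommRing K] [Ring L] [Algebra K L]
variable (a h x : L)

lemma aux_B (h1 : a * x - x * a = h) (h2 : h * a = a * h) (h3 : h * x = x * h)
    (g : K[X]) (i : ℕ) :
    a ^ i * Polynomial.aeval x g =
      ∑ j ∈ Finset.range (i + 1), (i.choose j) •
        (Polynomial.aeval x ((⇑Polynomial.derivative)^[i - j] g) * h ^ (i - j) * a ^ j) := by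
  have hah : Commute a h := h2.symm
  have key : ∀ p j : ℕ,
      a * (Polynomial.aeval x ((⇑derivative)^[p] g) * h ^ p * a ^ j) =
        Polynomial.aeval x ((⇑derivative)^[p] g) * h ^ p * a ^ (j + 1) +
          Polynomial.aeval x ((⇑derivative)^[p + 1] g) * h ^ (p + 1) * a ^ j := by
    intro p j
    have hA := aux_A a h x h1 h3 ((⇑derivative)^[p] g)
    rw [← Function.iterate_succ_apply' derivative p g] at hA
    calc a * (Polynomial.aeval x ((⇑derivative)^[p] g) * h ^ p * a ^ j)
        = (a * Polynomial.aeval x ((⇑derivative)^[p] g)) * (h ^ p * a ^ j) := by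
          rw [mul_assoc, mul_assoc]
      _ = Polynomial.aeval x ((⇑derivative)^[p] g) * (a * h ^ p) * a ^ j +
            Polynomial.aeval x ((⇑derivative)^[p + 1] g) * (h * h ^ p) * a ^ j := by
          rw [hA, add_mul]; noncomm_ring
      _ = _ := by
          simp only [mul_assoc, pow_succ', (hah.pow_right p).left_comm]
  induction i with
  | zero => simp
  | succ i ih =>
    rw [pow_succ', mul_assoc, ih, Finset.mul_sum]
    simp only [mul_smul_comm, key, smul_add]
    rw [Finset.sum_add_distrib]
    rw [Finset.sum_range_succ' _ (i + 1)]
    simp only [Nat.succ_sub_succ_eq_sub, Nat.choose_succ_succ, add_smul, Nat.choose_zero_right,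
      one_smul, Nat.sub_zero, pow_zero, mul_one]
    rw [Finset.sum_add_distrib]
    rw [Finset.sum_range_succ fun j => i.choose (j + 1) •
      (Polynomial.aeval x ((⇑derivative)^[i - j] g) * h ^ (i - j) * a ^ (j + 1))]
    rw [Nat.choose_succ_self, zero_smul, add_zero]
    rw [Finset.sum_range_succ' fun j => i.choose j •
      (Polynomial.aeval x ((⇑derivative)^[i - j + 1] g) * h ^ (i - j + 1) * a ^ j)]
    simp only [Nat.choose_zero_right, one_smul, Nat.sub_zero, pow_zero, mul_one]
    have hfix : ∑ k ∈ Finset.range i, i.choose (k + 1) •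
          (Polynomial.aeval x ((⇑derivative)^[i - (k + 1) + 1] g) * h ^ (i - (k + 1) + 1) *
            a ^ (k + 1)) =
        ∑ k ∈ Finset.range i, i.choose (k + 1) •
          (Polynomial.aeval x ((⇑derivative)^[i - k] g) * h ^ (i - k) * a ^ (k + 1)) := by
      refine Finset.sum_congr rfl (fun k hk => ?_)
      have hk' := Finset.mem_range.mp hk
      have hik : i - (k + 1) + 1 = i - k := by omega
      rw [hik]
    rw [hfix]
    abel

end

open Polynomial Finset

theorem stmt_16 (K : Type*) [CommRing K] (L : Type*) [Ring L] [Algebra K L]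
    (m n : ℕ) (hnm : n < m) (a h x : L)
    (h1 : a * x - x * a = h) (h2 : h * a = a * h) (h3 : h * x = x * h)
    (g : Polynomial K)
    (S : Matrix (Fin m) (Fin m) L)
    (hS : ∀ i j : Fin m, S i j = if (j : ℕ) = (i : ℕ) + 1 then 1 else 0)
    (V : Matrix (Fin m) (Fin m) L)
    (hV : ∀ i j : Fin m, V i j =
      if (j : ℕ) ≤ (i : ℕ) then
        ((i : ℕ).choose j) •
          (Polynomial.aeval x ((fun q => Polynomial.derivative q)^[(i : ℕ) - (j : ℕ)] g) *
            h ^ ((i : ℕ) - (j : ℕ)))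
      else 0)
    (e₀ : Matrix (Fin m) (Fin 1) L)
    (he : ∀ p : Fin m, ∀ q : Fin 1, e₀ p q = if (p : ℕ) = 0 then 1 else 0)
    (H₁ : Matrix (Fin m) (Fin 1) L)
    (hH : ∀ i : Fin m, ∀ j : Fin 1, H₁ i j = a ^ (i : ℕ)) :
    (Polynomial.aeval x g * a) ^ n = (e₀.transpose * (V * S) ^ n * H₁) 0 0 := by
  have hm0 : 0 < m := lt_of_le_of_lt (Nat.zero_le n) hnm
  have inv : ∀ k : ℕ, ∀ i : Fin m, (i : ℕ) + k < m →
      ((V * S) ^ k * H₁) i 0 = a ^ (i : ℕ) * (Polynomial.aeval x g * a) ^ k := by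
    intro k
    induction k with
    | zero => intro i _; simp [hH]
    | succ k ih =>
      intro i hi
      have hpow : (V * S) ^ (k + 1) * H₁ = V * (S * ((V * S) ^ k * H₁)) := by
        rw [pow_succ', Matrix.mul_assoc, Matrix.mul_assoc]
      have hSu : ∀ q : Fin m, (q : ℕ) + 1 + k < m →
          (S * ((V * S) ^ k * H₁)) q 0 =
            a ^ ((q : ℕ) + 1) * (Polynomial.aeval x g * a) ^ k := by
        intro q hq
        have hq1 : (q : ℕ) + 1 < m := by omega
        rw [Matrix.mul_apply]
        rw [Finset.sum_eq_single (⟨(q : ℕ) + 1, hq1⟩ : Fin m)]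
        · rw [hS, if_pos rfl, one_mul]
          exact ih ⟨(q : ℕ) + 1, hq1⟩ (by simpa using hq)
        · intro p _ hne
          rw [hS, if_neg, zero_mul]
          exact fun hc => hne (Fin.ext hc)
        · intro hx; exact absurd (Finset.mem_univ _) hx
      rw [hpow, Matrix.mul_apply]
      have step1 : ∀ p : Fin m, V i p * (S * ((V * S) ^ k * H₁)) p 0 =
          if (p : ℕ) ≤ (i : ℕ) then
            (((i : ℕ).choose p) •
              (Polynomial.aeval x ((fun q => Polynomial.derivative q)^[(i : ℕ) - (p : ℕ)] g) *
                h ^ ((i : ℕ) - (p : ℕ)))) *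
              (a ^ ((p : ℕ) + 1) * (Polynomial.aeval x g * a) ^ k)
          else 0 := by
        intro p
        rw [hV]
        by_cases hp : (p : ℕ) ≤ (i : ℕ)
        · rw [if_pos hp, if_pos hp, hSu p (by omega)]
        · rw [if_neg hp, if_neg hp, zero_mul]
      rw [Finset.sum_congr rfl (fun p _ => step1 p)]
      rw [Fin.sum_univ_eq_sum_range (fun j =>
        if j ≤ (i : ℕ) then
          (((i : ℕ).choose j) •
            (Polynomial.aeval x ((fun q => Polynomial.derivative q)^[(i : ℕ) - j] g) *
              h ^ ((i : ℕ) - j))) *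
            (a ^ (j + 1) * (Polynomial.aeval x g * a) ^ k)
        else 0) m]
      rw [← Finset.sum_subset (Finset.range_subset_range.mpr (show (i : ℕ) + 1 ≤ m by omega))
        (fun j _ hj => if_neg (by simpa using hj))]
      rw [Finset.sum_congr rfl (fun j hj => if_pos (by
        exact Nat.lt_succ_iff.mp (Finset.mem_range.mp hj)))]
      have hrhs : a ^ (i : ℕ) * (Polynomial.aeval x g * a) ^ (k + 1) =
          (a ^ (i : ℕ) * Polynomial.aeval x g) * (a * (Polynomial.aeval x g * a) ^ k) := by
        rw [pow_succ']
        simp only [mul_assoc]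
      rw [hrhs, aux_B a h x h1 h2 h3 g (i : ℕ), Finset.sum_mul]
      refine Finset.sum_congr rfl fun j hj => ?_
      simp only [smul_mul_assoc, mul_assoc, pow_succ]
  have main := inv n ⟨0, hm0⟩ (by simpa using hnm)
  rw [Matrix.mul_assoc, Matrix.mul_apply]
  rw [Finset.sum_eq_single (⟨0, hm0⟩ : Fin m)]
  · rw [Matrix.transpose_apply, he, if_pos rfl, one_mul, main, pow_zero, one_mul]
  · intro p _ hne
    rw [Matrix.transpose_apply, he, if_neg, zero_mul]
    exact fun hc => hne (Fin.ext hc)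
  · intro hx; exact absurd (Finset.mem_univ _) hx
end
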